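/- For every integer $g \geq 1$ and nonnegative integers $k_1,\dots,k_{2g+1}$ with $s_1 = k_1 + \dots + k_{2g+1} \geq \alpha g$ where $\alpha = \frac{9 + \sqrt{237}}{12}$, the following inequality holds: $\frac{-13g^3 - 9g^2 + 4g}{6} + g s_1(2s_1 + 2 - 3g) + s_2(2s_1 - 3g) + 2s_3 \geq 0$, where $s_j$ denotes the $j$th elementary symmetric polynomial in $k_1,\dots,k_{2g+1}$. -/

import Mathlib

/-!
Write `s = s₁`. Since `α = (9 + √237)/12` is the positive root of `12x² - 18x - 13`, the
hypothesis `s ≥ αg` gives `s(2s - 3g) ≥ 13g²/6`, which absorbs the cubic term `-13g³/6`.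
As `α > 2`, also `s ≥ 2g`, so `2gs ≥ 4g²` absorbs `-9g²/6`, and the remaining terms
`s₂(2s - 3g)`, `2s₃` and `4g/6` are nonnegative.
-/

/-- The `j`th elementary symmetric polynomial of `k : Fin (2*g+1) → ℕ`, as a real number. -/
def S {g : ℕ} (k : Fin (2 * g + 1) → ℕ) (j : ℕ) : ℝ :=
  ∑ P ∈ Finset.powersetCard j (Finset.univ : Finset (Fin (2 * g + 1))), ∏ i ∈ P, (k i : ℝ)

lemma S_nonneg {g : ℕ} (k : Fin (2 * g + 1) → ℕ) (j : ℕ) : 0 ≤ S k j :=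
  Finset.sum_nonneg fun _ _ => Finset.prod_nonneg fun _ _ => Nat.cast_nonneg _

section

variable {g s : ℝ}

lemma two_mul_le_of_alpha_mul_le (hg : 0 ≤ g) (h : (9 + √237) / 12 * g ≤ s) : 2 * g ≤ s := by
  have h15 : (15 : ℝ) ≤ √237 := Real.le_sqrt_of_sq_le (by norm_num)
  nlinarith

lemma mul_two_mul_sub_ge_of_alpha_mul_le (hg : 0 ≤ g) (h : (9 + √237) / 12 * g ≤ s) :
    13 / 6 * g ^ 2 ≤ s * (2 * s - 3 * g) := by
  have hsq : √237 ^ 2 = 237 := Real.sq_sqrt (by norm_num)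
  have hpos : 0 ≤ s + (√237 - 9) / 12 * g := by
    nlinarith [Real.le_sqrt_of_sq_le (show (15 : ℝ) ^ 2 ≤ 237 by norm_num)]
  -- `s(2s - 3g) - 13g²/6 = 2(s - αg)(s - α'g)` with `α' = (9 - √237)/12` the other root
  nlinarith [mul_nonneg (sub_nonneg.2 h) hpos]

lemma genus_polynomial_nonneg {s₂ s₃ : ℝ} (hg : 0 ≤ g) (hs₂ : 0 ≤ s₂) (hs₃ : 0 ≤ s₃)
    (h : (9 + √237) / 12 * g ≤ s) :
    0 ≤ (-13 * g ^ 3 - 9 * g ^ 2 + 4 * g) / 6 + g * s * (2 * s + 2 - 3 * g)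
      + s₂ * (2 * s - 3 * g) + 2 * s₃ := by
  have hquad := mul_two_mul_sub_ge_of_alpha_mul_le hg h
  have hlin := two_mul_le_of_alpha_mul_le hg h
  have hs₂_term : 0 ≤ s₂ * (2 * s - 3 * g) := mul_nonneg hs₂ (by linarith)
  nlinarith [mul_le_mul_of_nonneg_left hquad hg, mul_le_mul_of_nonneg_left hlin hg]

end

theorem general_genus_inequality_general (g : ℕ) (k : Fin (2 * g + 1) → ℕ)
    (h : (9 + Real.sqrt 237) / 12 * g ≤ S k 1) :
    0 ≤ (-13 * (g : ℝ) ^ 3 - 9 * g ^ 2 + 4 * g) / 6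
        + g * S k 1 * (2 * S k 1 + 2 - 3 * g)
        + S k 2 * (2 * S k 1 - 3 * g) + 2 * S k 3 :=
  genus_polynomial_nonneg (Nat.cast_nonneg g) (S_nonneg k 2) (S_nonneg k 3) h

theorem general_genus_inequality (g : ℕ) (hg : 1 ≤ g) (k : Fin (2 * g + 1) → ℕ)
    (h : (9 + Real.sqrt 237) / 12 * g ≤ S k 1) :
    0 ≤ (-13 * (g : ℝ) ^ 3 - 9 * g ^ 2 + 4 * g) / 6
        + g * S k 1 * (2 * S k 1 + 2 - 3 * g)
        + S k 2 * (2 * S k 1 - 3 * g) + 2 * S k 3 :=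
  general_genus_inequality_general g k h
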